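/- arXiv:1209.2179 — 2 statements merged into one kernel-verified Lean document; each statement's English description precedes it below -/
import Mathlib

section
/- Let g11, g12, g21, g22 > 0 be channel gains and P1, P2 > 0 power budgets. Suppose (R1, R2) lies on the rate region frontier. If (2^R1 - 1)(2^R2 - 1) > 1, then every feasible power allocation (P11, P21, P12, P22) achieving (R1, R2) satisfies P11·P21 = 0 and P12·P22 = 0 (each base station transmits only one of the two messages). -/
/-- User-1 rate of a power allocation. -/
noncomputable def rate1 (g11 g12 P11 P21 P12 P22 : ℝ) : ℝ :=
  Real.logb 2 (1 + (g11 * P11 + g12 * P12) / (1 + g11 * P21 + g12 * P22))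

/-- User-2 rate of a power allocation. -/
noncomputable def rate2 (g21 g22 P11 P21 P12 P22 : ℝ) : ℝ :=
  Real.logb 2 (1 + (g21 * P21 + g22 * P22) / (1 + g21 * P11 + g22 * P12))

/-- Feasibility of a power allocation under per-BTS power budgets. -/
def feasible (P1 P2 P11 P21 P12 P22 : ℝ) : Prop :=
  0 ≤ P11 ∧ 0 ≤ P21 ∧ 0 ≤ P12 ∧ 0 ≤ P22 ∧ P11 + P21 ≤ P1 ∧ P12 + P22 ≤ P2


/-!
If base station 1 sends both messages, move power away from both at once: lower `P21` by `ε`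
and `P11` by `x ε`, where `x` is the SINR of user 1. Since the numerator of user 1's SINR is
`x` times its denominator, `x` (hence `R1`) is unchanged, while user 2's SINR
`y = N / D` becomes `(N - g21 ε) / (D - x g21 ε)`, which exceeds `y` exactly when `x y > 1`,
i.e. when `(2^R1 - 1)(2^R2 - 1) > 1`. This contradicts maximality of `R2`. Base station 2 is
handled by relabelling the two stations.
-/

open Real

noncomputable def sinr1 (g11 g12 P11 P21 P12 P22 : ℝ) : ℝ :=
  (g11 * P11 + g12 * P12) / (1 + g11 * P21 + g12 * P22)

noncomputable def sinr2 (g21 g22 P11 P21 P12 P22 : ℝ) : ℝ :=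
  (g21 * P21 + g22 * P22) / (1 + g21 * P11 + g22 * P12)

def Rate2Maximal (g11 g12 g21 g22 P1 P2 R1 R2 : ℝ) : Prop :=
  ∀ P11 P21 P12 P22, feasible P1 P2 P11 P21 P12 P22 →
    rate1 g11 g12 P11 P21 P12 P22 = R1 → rate2 g21 g22 P11 P21 P12 P22 ≤ R2

lemma sub_mul_div_sub_eq_of_div_eq {N D x δ : ℝ} (hD : D ≠ 0) (hDδ : D - δ ≠ 0)
    (hx : N / D = x) : (N - x * δ) / (D - δ) = x := by
  rw [div_eq_iff hD] at hx
  rw [div_eq_iff hDδ, hx]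
  ring

lemma lt_sub_div_sub_mul_of_one_lt_mul {N D x y δ : ℝ} (hD : D ≠ 0) (hDδ : 0 < D - x * δ)
    (hδ : 0 < δ) (hy : N / D = y) (hxy : 1 < x * y) : y < (N - δ) / (D - x * δ) := by
  rw [div_eq_iff hD] at hy
  rw [lt_div_iff₀ hDδ, hy]
  nlinarith

section Rates

variable {g11 g12 g21 g22 P1 P2 P11 P21 P12 P22 : ℝ}

lemma sinr1_nonneg (hg11 : 0 ≤ g11) (hg12 : 0 ≤ g12) (h11 : 0 ≤ P11) (h21 : 0 ≤ P21)
    (h12 : 0 ≤ P12) (h22 : 0 ≤ P22) : 0 ≤ sinr1 g11 g12 P11 P21 P12 P22 := by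
  unfold sinr1; positivity

lemma sinr2_nonneg (hg21 : 0 ≤ g21) (hg22 : 0 ≤ g22) (h11 : 0 ≤ P11) (h21 : 0 ≤ P21)
    (h12 : 0 ≤ P12) (h22 : 0 ≤ P22) : 0 ≤ sinr2 g21 g22 P11 P21 P12 P22 := by
  unfold sinr2; positivity

lemma two_rpow_rate1 (h : 0 ≤ sinr1 g11 g12 P11 P21 P12 P22) :
    (2 : ℝ) ^ rate1 g11 g12 P11 P21 P12 P22 = 1 + sinr1 g11 g12 P11 P21 P12 P22 :=
  rpow_logb two_pos (by norm_num) (by unfold sinr1 at h; linarith)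

lemma two_rpow_rate2 (h : 0 ≤ sinr2 g21 g22 P11 P21 P12 P22) :
    (2 : ℝ) ^ rate2 g21 g22 P11 P21 P12 P22 = 1 + sinr2 g21 g22 P11 P21 P12 P22 :=
  rpow_logb two_pos (by norm_num) (by unfold sinr2 at h; linarith)

lemma rate1_transfer (ε : ℝ) (hD : 1 + g11 * P21 + g12 * P22 ≠ 0)
    (hD' : 1 + g11 * (P21 - ε) + g12 * P22 ≠ 0) :
    rate1 g11 g12 (P11 - sinr1 g11 g12 P11 P21 P12 P22 * ε) (P21 - ε) P12 P22 =
      rate1 g11 g12 P11 P21 P12 P22 := by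
  have hsinr : (g11 * (P11 - sinr1 g11 g12 P11 P21 P12 P22 * ε) + g12 * P12) /
      (1 + g11 * (P21 - ε) + g12 * P22) = sinr1 g11 g12 P11 P21 P12 P22 := by
    convert sub_mul_div_sub_eq_of_div_eq (N := g11 * P11 + g12 * P12)
      (x := sinr1 g11 g12 P11 P21 P12 P22) (δ := g11 * ε) hD (by convert hD' using 1; ring) rfl
      using 2 <;> ring
  unfold rate1
  rw [hsinr]
  rfl

lemma rate2_lt_rate2_transfer {x ε : ℝ} (hg21 : 0 < g21) (hε : 0 < ε)
    (hD : 1 + g21 * P11 + g22 * P12 ≠ 0) (hD' : 0 < 1 + g21 * (P11 - x * ε) + g22 * P12)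
    (hy : 0 ≤ sinr2 g21 g22 P11 P21 P12 P22) (hxy : 1 < x * sinr2 g21 g22 P11 P21 P12 P22) :
    rate2 g21 g22 P11 P21 P12 P22 < rate2 g21 g22 (P11 - x * ε) (P21 - ε) P12 P22 := by
  have hsinr : sinr2 g21 g22 P11 P21 P12 P22 <
      (g21 * (P21 - ε) + g22 * P22) / (1 + g21 * (P11 - x * ε) + g22 * P12) := by
    convert lt_sub_div_sub_mul_of_one_lt_mul (N := g21 * P21 + g22 * P22)
      (y := sinr2 g21 g22 P11 P21 P12 P22) (δ := g21 * ε) hD (by convert hD' using 1; ring)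
      (mul_pos hg21 hε) rfl hxy using 2 <;> ring
  unfold sinr2 at hy hsinr
  exact logb_lt_logb one_lt_two (by linarith) (by linarith)

lemma feasible_swap :
    feasible P1 P2 P11 P21 P12 P22 ↔ feasible P2 P1 P12 P22 P11 P21 := by
  unfold feasible; tauto

lemma rate1_swap : rate1 g11 g12 P11 P21 P12 P22 = rate1 g12 g11 P12 P22 P11 P21 := by
  unfold rate1; ring_nf

lemma rate2_swap : rate2 g21 g22 P11 P21 P12 P22 = rate2 g22 g21 P12 P22 P11 P21 := by
  unfold rate2; ring_nf

lemma Rate2Maximal.swap {R1 R2 : ℝ} (h : Rate2Maximal g11 g12 g21 g22 P1 P2 R1 R2) :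
    Rate2Maximal g12 g11 g22 g21 P2 P1 R1 R2 := by
  intro Q12 Q22 Q11 Q21 hfeas hr1
  rw [← rate2_swap]
  exact h _ _ _ _ (feasible_swap.2 hfeas) (rate1_swap.trans hr1)

lemma mul_eq_zero_of_rate2Maximal {R1 R2 : ℝ} (hg11 : 0 ≤ g11) (hg12 : 0 ≤ g12)
    (hg21 : 0 < g21) (hg22 : 0 ≤ g22) (hmax : Rate2Maximal g11 g12 g21 g22 P1 P2 R1 R2)
    (hcond : 1 < ((2 : ℝ) ^ R1 - 1) * ((2 : ℝ) ^ R2 - 1))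
    (hfeas : feasible P1 P2 P11 P21 P12 P22) (hr1 : rate1 g11 g12 P11 P21 P12 P22 = R1)
    (hr2 : rate2 g21 g22 P11 P21 P12 P22 = R2) : P11 * P21 = 0 := by
  obtain ⟨h11, h21, h12, h22, hs1, hs2⟩ := hfeas
  by_contra hne
  have hP11 : 0 < P11 := h11.lt_of_ne' (left_ne_zero_of_mul hne)
  have hP21 : 0 < P21 := h21.lt_of_ne' (right_ne_zero_of_mul hne)
  set x := sinr1 g11 g12 P11 P21 P12 P22
  set y := sinr2 g21 g22 P11 P21 P12 P22
  have hx : 0 ≤ x := sinr1_nonneg hg11 hg12 h11 h21 h12 h22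
  have hy : 0 ≤ y := sinr2_nonneg hg21.le hg22 h11 h21 h12 h22
  have hxy : 1 < x * y := by
    rwa [← hr1, ← hr2, two_rpow_rate1 hx, two_rpow_rate2 hy, add_sub_cancel_left,
      add_sub_cancel_left] at hcond
  have hx_pos : 0 < x := by nlinarith
  set ε := min P21 (P11 / x)
  have hε : 0 < ε := lt_min hP21 (div_pos hP11 hx_pos)
  have hε21 : 0 ≤ P21 - ε := sub_nonneg.2 (min_le_left _ _)
  have hε11 : 0 ≤ P11 - x * ε := sub_nonneg.2 ((le_div_iff₀' hx_pos).1 (min_le_right _ _))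
  have hfeas' : feasible P1 P2 (P11 - x * ε) (P21 - ε) P12 P22 :=
    ⟨hε11, hε21, h12, h22, by linarith [mul_pos hx_pos hε], hs2⟩
  have hr1' : rate1 g11 g12 (P11 - x * ε) (P21 - ε) P12 P22 = R1 :=
    (rate1_transfer ε (by positivity) (by nlinarith [mul_nonneg hg11 hε21])).trans hr1
  have hr2' : R2 < rate2 g21 g22 (P11 - x * ε) (P21 - ε) P12 P22 :=
    hr2 ▸ rate2_lt_rate2_transfer hg21 hε (by positivity)
      (by nlinarith [mul_nonneg hg21.le hε11]) hy hxy
  exact (hmax _ _ _ _ hfeas' hr1').not_gt hr2'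

end Rates

theorem frontier_single_message_general
    (g11 g12 g21 g22 P1 P2 R1 R2 : ℝ)
    (hg11 : 0 < g11) (hg12 : 0 < g12) (hg21 : 0 < g21) (hg22 : 0 < g22)
    (hfront : ∀ P11 P21 P12 P22, feasible P1 P2 P11 P21 P12 P22 →
      rate1 g11 g12 P11 P21 P12 P22 = R1 → rate2 g21 g22 P11 P21 P12 P22 ≤ R2)
    (hcond : 1 < ((2 : ℝ) ^ R1 - 1) * ((2 : ℝ) ^ R2 - 1)) :
    ∀ P11 P21 P12 P22, feasible P1 P2 P11 P21 P12 P22 →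
      rate1 g11 g12 P11 P21 P12 P22 = R1 → rate2 g21 g22 P11 P21 P12 P22 = R2 →
      P11 * P21 = 0 ∧ P12 * P22 = 0 := by
  intro P11 P21 P12 P22 hfeas hr1 hr2
  have hmax : Rate2Maximal g11 g12 g21 g22 P1 P2 R1 R2 := hfront
  exact ⟨mul_eq_zero_of_rate2Maximal hg11.le hg12.le hg21 hg22.le hmax hcond hfeas hr1 hr2,
    mul_eq_zero_of_rate2Maximal hg12.le hg11.le hg22 hg21.le hmax.swap hcond
      (feasible_swap.1 hfeas) (rate1_swap.symm.trans hr1) (rate2_swap.symm.trans hr2)⟩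

theorem frontier_single_message
    (g11 g12 g21 g22 P1 P2 R1 R2 : ℝ)
    (hg11 : 0 < g11) (hg12 : 0 < g12) (hg21 : 0 < g21) (hg22 : 0 < g22)
    (hP1 : 0 < P1) (hP2 : 0 < P2)
    (hach : ∃ P11 P21 P12 P22, feasible P1 P2 P11 P21 P12 P22 ∧
      rate1 g11 g12 P11 P21 P12 P22 = R1 ∧ rate2 g21 g22 P11 P21 P12 P22 = R2)
    (hfront : ∀ P11 P21 P12 P22, feasible P1 P2 P11 P21 P12 P22 →
      rate1 g11 g12 P11 P21 P12 P22 = R1 → rate2 g21 g22 P11 P21 P12 P22 ≤ R2)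
    (hcond : 1 < ((2 : ℝ) ^ R1 - 1) * ((2 : ℝ) ^ R2 - 1)) :
    ∀ P11 P21 P12 P22, feasible P1 P2 P11 P21 P12 P22 →
      rate1 g11 g12 P11 P21 P12 P22 = R1 → rate2 g21 g22 P11 P21 P12 P22 = R2 →
      P11 * P21 = 0 ∧ P12 * P22 = 0 :=
  frontier_single_message_general g11 g12 g21 g22 P1 P2 R1 R2 hg11 hg12 hg21 hg22 hfront hcond
end

section
/- Let g11, g12, g21, g22 > 0 and let (P11, P21, P12, P22) be nonnegative reals with g11·P11 + g12·P12 > 0 and g21·P21 + g22·P22 > 0. Then for every t > 1, scaling all four powers by t strictly increases both rates: R1(t·P11, t·P21, t·P12, t·P22) > R1(P11, P21, P12, P22) and R2(t·P11, t·P21, t·P12, t·P22) > R2(P11, P21, P12, P22). Consequently, at any point on the rate region frontier with both rates positive, at least one of the per-base-station power constraints must be binding. -/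
open Real Set Filter Topology

lemma div_one_add_lt_mul_div_one_add_mul {S I t : ℝ} (hS : 0 < S) (hI : 0 ≤ I) (ht : 1 < t) :
    S / (1 + I) < t * S / (1 + t * I) := by
  rw [div_lt_div_iff₀ (by positivity) (by nlinarith)]
  nlinarith

lemma exists_mem_Icc_logb_one_add_mul_eq {b c R : ℝ} (hb : 1 < b) (hc : 0 ≤ c) (hR : 0 ≤ R)
    (hRc : R ≤ logb b (1 + c)) : ∃ s ∈ Icc (0 : ℝ) 1, logb b (1 + s * c) = R := by
  rcases hc.eq_or_lt with rfl | hc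
  · exact ⟨0, ⟨le_rfl, zero_le_one⟩, by simpa using (le_antisymm hRc (by simpa using hR)).symm⟩
  have hbR : 1 ≤ b ^ R := one_le_rpow hb.le hR
  have hbRc : b ^ R ≤ 1 + c := (le_logb_iff_rpow_le hb (by linarith)).1 hRc
  refine ⟨(b ^ R - 1) / c, ⟨by bound, div_le_one_of_le₀ (by linarith) hc.le⟩, ?_⟩
  rw [div_mul_cancel₀ _ hc.ne', add_sub_cancel, logb_rpow (by linarith) hb.ne']

lemma feasible.mono {P1 P2 P11 P21 P12 P22 Q11 Q21 Q12 Q22 : ℝ}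
    (h : feasible P1 P2 Q11 Q21 Q12 Q22) (h11 : 0 ≤ P11) (h21 : 0 ≤ P21) (h12 : 0 ≤ P12)
    (h22 : 0 ≤ P22) (hQ11 : P11 ≤ Q11) (hQ21 : P21 ≤ Q21) (hQ12 : P12 ≤ Q12) (hQ22 : P22 ≤ Q22) :
    feasible P1 P2 P11 P21 P12 P22 :=
  ⟨h11, h21, h12, h22, by linarith [h.2.2.2.2.1], by linarith [h.2.2.2.2.2]⟩

section Rates

variable {g11 g12 P11 P21 P12 P22 : ℝ}

lemma rate2_eq_rate1 (g21 g22 P11 P21 P12 P22 : ℝ) :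
    rate2 g21 g22 P11 P21 P12 P22 = rate1 g21 g22 P21 P11 P22 P12 := rfl

lemma rate1_eq_logb (g11 g12 P11 P21 P12 P22 : ℝ) :
    rate1 g11 g12 P11 P21 P12 P22 =
      logb 2 (1 + (g11 * P11 + g12 * P12) / (1 + (g11 * P21 + g12 * P22))) := by
  rw [rate1, add_assoc]

lemma rate1_nonneg (hS : 0 ≤ g11 * P11 + g12 * P12) (hI : 0 ≤ g11 * P21 + g12 * P22) :
    0 ≤ rate1 g11 g12 P11 P21 P12 P22 := by
  rw [rate1_eq_logb]
  exact logb_nonneg one_lt_two (le_add_of_nonneg_right (by positivity))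

lemma rate1_lt_rate1_mul (hS : 0 < g11 * P11 + g12 * P12) (hI : 0 ≤ g11 * P21 + g12 * P22)
    {t : ℝ} (ht : 1 < t) :
    rate1 g11 g12 P11 P21 P12 P22 < rate1 g11 g12 (t * P11) (t * P21) (t * P12) (t * P22) := by
  have hscale : ∀ x y : ℝ, g11 * (t * x) + g12 * (t * y) = t * (g11 * x + g12 * y) :=
    fun _ _ ↦ by ring
  rw [rate1_eq_logb, rate1_eq_logb, hscale, hscale]
  exact logb_lt_logb one_lt_two (by positivity)
    (by linarith [div_one_add_lt_mul_div_one_add_mul hS hI ht])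

lemma rate1_le_rate1_mul_interference (hS : 0 ≤ g11 * P11 + g12 * P12)
    (hI : 0 ≤ g11 * P21 + g12 * P22) {s : ℝ} (hs₀ : 0 ≤ s) (hs₁ : s ≤ 1) :
    rate1 g11 g12 P11 P21 P12 P22 ≤ rate1 g11 g12 P11 (s * P21) P12 (s * P22) := by
  have hscale : g11 * (s * P21) + g12 * (s * P22) = s * (g11 * P21 + g12 * P22) := by ring
  rw [rate1_eq_logb, rate1_eq_logb, hscale]
  refine logb_le_logb_of_le one_lt_two (by positivity) ?_
  gcongr
  exact mul_le_of_le_one_left hI hs₁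

lemma exists_rate1_mul_signal_eq (hS : 0 ≤ g11 * P11 + g12 * P12)
    (hI : 0 ≤ g11 * P21 + g12 * P22) {R : ℝ} (hR : 0 ≤ R)
    (hRle : R ≤ rate1 g11 g12 P11 P21 P12 P22) :
    ∃ s ∈ Icc (0 : ℝ) 1, rate1 g11 g12 (s * P11) P21 (s * P12) P22 = R := by
  simp only [rate1_eq_logb] at hRle ⊢
  obtain ⟨s, hs, hsR⟩ := exists_mem_Icc_logb_one_add_mul_eq one_lt_two (by positivity) hR hRle
  refine ⟨s, hs, ?_⟩
  rw [← hsR, mul_div_assoc', mul_add, mul_left_comm s g11, mul_left_comm s g12]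

end Rates

lemma eventually_mul_lt_of_lt {a b : ℝ} (h : a < b) : ∀ᶠ t in 𝓝 1, t * a < b := by
  have : Tendsto (fun t : ℝ ↦ t * a) (𝓝 1) (𝓝 a) := by
    simpa using (tendsto_id (x := 𝓝 (1 : ℝ))).mul_const a
  exact this.eventually (gt_mem_nhds h)

lemma exists_feasible_rate1_eq_rate2_gt {g11 g12 g21 g22 P1 P2 P11 P21 P12 P22 : ℝ}
    (hg11 : 0 ≤ g11) (hg12 : 0 ≤ g12) (hg21 : 0 ≤ g21) (hg22 : 0 ≤ g22)
    (hpos1 : 0 < g11 * P11 + g12 * P12) (hpos2 : 0 < g21 * P21 + g22 * P22)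
    (hfeas : feasible P1 P2 P11 P21 P12 P22) (hslack1 : P11 + P21 ≠ P1)
    (hslack2 : P12 + P22 ≠ P2) :
    ∃ Q11 Q21 Q12 Q22, feasible P1 P2 Q11 Q21 Q12 Q22 ∧
      rate1 g11 g12 Q11 Q21 Q12 Q22 = rate1 g11 g12 P11 P21 P12 P22 ∧
      rate2 g21 g22 P11 P21 P12 P22 < rate2 g21 g22 Q11 Q21 Q12 Q22 := by
  obtain ⟨hP11, hP21, hP12, hP22, hle1, hle2⟩ := hfeas
  obtain ⟨t, ⟨ht1, ht2⟩, ht : 1 < t⟩ :=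
    (((eventually_mul_lt_of_lt (hle1.lt_of_ne hslack1)).and
      (eventually_mul_lt_of_lt (hle2.lt_of_ne hslack2))).filter_mono
      nhdsWithin_le_nhds |>.and (eventually_mem_nhdsWithin (s := Ioi 1))).exists
  have ht₀ : 0 ≤ t := by linarith
  have hfeas_t : feasible P1 P2 (t * P11) (t * P21) (t * P12) (t * P22) :=
    ⟨by positivity, by positivity, by positivity, by positivity, by linarith, by linarith⟩
  have hrate1 : rate1 g11 g12 P11 P21 P12 P22 <
      rate1 g11 g12 (t * P11) (t * P21) (t * P12) (t * P22) :=
    rate1_lt_rate1_mul hpos1 (by positivity) ht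
  obtain ⟨s, ⟨hs₀, hs₁⟩, hs⟩ := exists_rate1_mul_signal_eq (by positivity) (by positivity)
    (rate1_nonneg hpos1.le (by positivity)) hrate1.le
  refine ⟨s * (t * P11), t * P21, s * (t * P12), t * P22, ?_, hs, ?_⟩
  · exact hfeas_t.mono (by positivity) (by positivity) (by positivity) (by positivity)
      (mul_le_of_le_one_left (by positivity) hs₁) le_rfl
      (mul_le_of_le_one_left (by positivity) hs₁) le_rfl
  · rw [rate2_eq_rate1, rate2_eq_rate1]
    exact (rate1_lt_rate1_mul hpos2 (by positivity) ht).trans_le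
      (rate1_le_rate1_mul_interference (by positivity) (by positivity) hs₀ hs₁)

theorem scaling_increases_rates_and_frontier_binding
    (g11 g12 g21 g22 : ℝ)
    (hg11 : 0 < g11) (hg12 : 0 < g12) (hg21 : 0 < g21) (hg22 : 0 < g22)
    (P11 P21 P12 P22 : ℝ)
    (hP11 : 0 ≤ P11) (hP21 : 0 ≤ P21) (hP12 : 0 ≤ P12) (hP22 : 0 ≤ P22)
    (hpos1 : 0 < g11 * P11 + g12 * P12) (hpos2 : 0 < g21 * P21 + g22 * P22) :
    (∀ t : ℝ, 1 < t →
      rate1 g11 g12 P11 P21 P12 P22 <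
        rate1 g11 g12 (t * P11) (t * P21) (t * P12) (t * P22) ∧
      rate2 g21 g22 P11 P21 P12 P22 <
        rate2 g21 g22 (t * P11) (t * P21) (t * P12) (t * P22)) ∧
    (∀ P1 P2 R1 R2 : ℝ, 0 < P1 → 0 < P2 → 0 < R1 → 0 < R2 →
      feasible P1 P2 P11 P21 P12 P22 →
      rate1 g11 g12 P11 P21 P12 P22 = R1 →
      rate2 g21 g22 P11 P21 P12 P22 = R2 →
      (∀ Q11 Q21 Q12 Q22, feasible P1 P2 Q11 Q21 Q12 Q22 →
        rate1 g11 g12 Q11 Q21 Q12 Q22 = R1 → rate2 g21 g22 Q11 Q21 Q12 Q22 ≤ R2) →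
      P11 + P21 = P1 ∨ P12 + P22 = P2) := by
  refine ⟨fun t ht ↦ ⟨rate1_lt_rate1_mul hpos1 (by positivity) ht,
    rate1_lt_rate1_mul (P21 := P11) (P22 := P12) hpos2 (by positivity) ht⟩, ?_⟩
  intro P1 P2 R1 R2 _ _ _ _ hfeas hR1 hR2 hopt
  by_contra! hslack
  obtain ⟨Q11, Q21, Q12, Q22, hQ, hQ1, hQ2⟩ :=
    exists_feasible_rate1_eq_rate2_gt hg11.le hg12.le hg21.le hg22.le hpos1 hpos2 hfeas
      hslack.1 hslack.2
  exact (hQ2.trans_le (hopt Q11 Q21 Q12 Q22 hQ (hQ1.trans hR1))).ne hR2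
end
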